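/- Let (g,[·,…,·],α) be an n-ary multiplicative Hom-Nambu-Lie superalgebra. Then [𝔵,𝔶]_α · α(z) = -(-1)^{|𝔵||𝔶|} [𝔶,𝔵]_α · α(z) for all fundamental objects 𝔵,𝔶 and z ∈ g; i.e., the induced action of [·,·]_α on α(g) is super-skew-symmetric. -/

import Mathlib

open scoped BigOperators

universe u v w

variable (K : Type u) [Field K]

/-- The sign `(-1)^(a·b)` for `a b : ZMod 2`. -/
def sgn (a b : ZMod 2) : K := if a = 1 ∧ b = 1 then -1 else 1

/-- Sum of the degrees with index strictly below `i`. -/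
def psum {m : ℕ} (d : Fin m → ZMod 2) (i : Fin m) : ZMod 2 :=
  ∑ j ∈ Finset.univ.filter (fun j => j < i), d j

/-- Sum of the degrees with index strictly above `i`. -/
def ssum {m : ℕ} (d : Fin m → ZMod 2) (i : Fin m) : ZMod 2 :=
  ∑ j ∈ Finset.univ.filter (fun j => i < j), d j

/-- Raw data of an `(n+2)`-ary algebra with a `ZMod 2`-grading and a twisting map:
a grading by submodules forming an internal direct sum, an `(n+2)`-linear bracket and
a linear map `α`. -/
structure NData (n : ℕ) (g : Type v) [AddCommGroup g] [Module K g] where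
  G : ZMod 2 → Submodule K g
  internal : DirectSum.IsInternal G
  br : MultilinearMap K (fun _ : Fin (n + 2) => g) g
  α : g →ₗ[K] g

namespace NData

variable {K} {n : ℕ} {g : Type v} [AddCommGroup g] [Module K g] (A : NData K n g)

/-- A tuple is homogeneous with (componentwise) degrees `d`. -/
def Homog {m : ℕ} (x : Fin m → g) (d : Fin m → ZMod 2) : Prop := ∀ i, x i ∈ A.G (d i)

/-- Action of a fundamental object (an `(n+1)`-tuple) on an element. -/
def act (x : Fin (n + 1) → g) (z : g) : g := A.br (Fin.snoc x z)

/-- The `i`-th component tuple of the bracket `[x,y]_α` of fundamental objects: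
`α y₁ ∧ ⋯ ∧ (x · yᵢ) ∧ ⋯ ∧ α y_{n+1}`. -/
def comp (x y : Fin (n + 1) → g) (i : Fin (n + 1)) : Fin (n + 1) → g :=
  Function.update (fun k => A.α (y k)) i (A.act x (y i))

/-- The bracket is even. -/
def BrEven : Prop := ∀ (d : Fin (n + 2) → ZMod 2) (x : Fin (n + 2) → g),
  A.Homog x d → A.br x ∈ A.G (∑ i, d i)

/-- The bracket is super-skew-symmetric in adjacent arguments. -/
def BrSkew : Prop := ∀ (d : Fin (n + 2) → ZMod 2) (x : Fin (n + 2) → g), A.Homog x d →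
  ∀ i j : Fin (n + 2), (i : ℕ) + 1 = (j : ℕ) →
    A.br (x ∘ Equiv.swap i j) = -(sgn K (d i) (d j) • A.br x)

/-- `α` is even. -/
def AlphaEven : Prop := ∀ (d : ZMod 2) (x : g), x ∈ A.G d → A.α x ∈ A.G d

/-- `α` is multiplicative with respect to the bracket. -/
def Mult : Prop := ∀ x : Fin (n + 2) → g, A.α (A.br x) = A.br fun i => A.α (x i)

/-- The graded Filippov (fundamental) identity. -/
def Filippov : Prop := ∀ (dx : Fin (n + 1) → ZMod 2) (dy : Fin (n + 2) → ZMod 2)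
    (x : Fin (n + 1) → g) (y : Fin (n + 2) → g), A.Homog x dx → A.Homog y dy →
  A.act x (A.br y) = ∑ i, sgn K (∑ k, dx k) (psum dy i) •
    A.br (Function.update y i (A.act x (y i)))

/-- The `α`-twisted graded Filippov identity. -/
def HomFilippov : Prop := ∀ (dx : Fin (n + 1) → ZMod 2) (dy : Fin (n + 2) → ZMod 2)
    (x : Fin (n + 1) → g) (y : Fin (n + 2) → g), A.Homog x dx → A.Homog y dy →
  A.act (fun k => A.α (x k)) (A.br y) = ∑ i, sgn K (∑ k, dx k) (psum dy i) •
    A.br (Function.update (fun k => A.α (y k)) i (A.act x (y i)))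

/-- `(g,[·,…,·])` is an `(n+2)`-ary Nambu-Lie superalgebra (the map `α` is irrelevant). -/
def IsNambuLieSuper : Prop := A.BrEven ∧ A.BrSkew ∧ A.Filippov

/-- `(g,[·,…,·],α)` is an `(n+2)`-ary multiplicative Hom-Nambu-Lie superalgebra. -/
def IsHomNambuLieSuper : Prop :=
  A.BrEven ∧ A.BrSkew ∧ A.AlphaEven ∧ A.Mult ∧ A.HomFilippov

/-- The action of the bracket `[x,y]_α` of two fundamental objects on an element `z`,
where `dx` is the total degree of `x` and `dy` the componentwise degrees of `y`. -/
def wbrAct (dx : ZMod 2) (dy : Fin (n + 1) → ZMod 2) (x y : Fin (n + 1) → g) (z : g) : g :=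
  ∑ i, sgn K dx (psum dy i) • A.act (A.comp x y i) z

/-- `(ρ, ν, GV)` is a graded representation of `A` on `V`. -/
def IsRep {V : Type w} [AddCommGroup V] [Module K V]
    (ρ : MultilinearMap K (fun _ : Fin (n + 1) => g) (Module.End K V))
    (ν : Module.End K V) (GV : ZMod 2 → Submodule K V) : Prop :=
  (∀ (d : Fin (n + 1) → ZMod 2) (x : Fin (n + 1) → g), A.Homog x d →
    ∀ (β : ZMod 2) (v : V), v ∈ GV β → ρ x v ∈ GV (β + ∑ i, d i)) ∧
  (∀ (dx dy : Fin (n + 1) → ZMod 2) (x y : Fin (n + 1) → g), A.Homog x dx → A.Homog y dy →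
    ρ (fun k => A.α (x k)) * ρ y
      = sgn K (∑ i, dx i) (∑ i, dy i) • (ρ (fun k => A.α (y k)) * ρ x)
        + (∑ i, sgn K (∑ k, dx k) (psum dy i) • ρ (A.comp x y i)) * ν) ∧
  (∀ (dx : Fin n → ZMod 2) (dy : Fin (n + 2) → ZMod 2) (x : Fin n → g) (y : Fin (n + 2) → g),
    A.Homog x dx → A.Homog y dy →
    ρ (Fin.snoc (fun k => A.α (x k)) (A.br y)) * ν
      = ∑ i : Fin (n + 2), ((-1 : K) ^ (n + 1 - (i : ℕ))
          * sgn K (∑ k, dx k) ((∑ k, dy k) + dy i)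
          * sgn K (dy i) (ssum dy i)) •
        (ρ (fun k => A.α (y (i.succAbove k))) * ρ (Fin.snoc x (y i))))

/-- The adjoint action of a fundamental object, as an endomorphism of `g`. -/
def adE : MultilinearMap K (fun _ : Fin (n + 1) => g) (Module.End K g) :=
  A.br.curryRight

/-- The degree-`d` part of the graded dual space: functionals vanishing on the
component of the other degree. -/
def dualG (d : ZMod 2) : Submodule K (Module.Dual K g) where
  carrier := {f | ∀ x ∈ A.G (d + 1), f x = 0}
  add_mem' := by
    intro a b ha hb x hx
    simp [ha x hx, hb x hx]
  zero_mem' := by intro x _; simp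
  smul_mem' := by
    intro c f hf x hx
    simp [hf x hx]

/-- The coadjoint action `ad*(x)(φ) = -(-1)^{|x||φ|} φ ∘ ad(x)`, with the degrees
`dx` of `x` and `df` of `φ` given explicitly. -/
def coad (dx df : ZMod 2) (x : Fin (n + 1) → g) (φ : Module.Dual K g) : Module.Dual K g :=
  -(sgn K dx df) • (φ ∘ₗ (A.adE x : g →ₗ[K] g))

/-- The grading of `g ⊕ g*`. -/
def tG (d : ZMod 2) : Submodule K (g × Module.Dual K g) := (A.G d).prod (A.dualG d)

/-- The twist map `α'(x+f) = α(x) + f ∘ α` of the `T*`-extension. -/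
def tα : (g × Module.Dual K g) →ₗ[K] g × Module.Dual K g :=
  LinearMap.prodMap A.α A.α.dualMap

/-- The bracket of the `T*`-extension by `θ`, on tuples with degree annotations `d`. -/
def tbr (θ : (Fin (n + 2) → g) → Module.Dual K g) (d : Fin (n + 2) → ZMod 2)
    (p : Fin (n + 2) → g × Module.Dual K g) : g × Module.Dual K g :=
  (A.br (fun i => (p i).1),
   θ (fun i => (p i).1)
     + ∑ i : Fin (n + 2), ((-1 : K) ^ (n + 1 - (i : ℕ)) * sgn K (d i) (ssum d i)) •
         A.coad ((∑ k, d k) + d i) (d i) (fun k => (p (i.succAbove k)).1) ((p i).2))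

/-- The canonical pairing `⟨x+f, y+h⟩ = f(y) + (-1)^{|x+f||y+h|} h(x)` on `g ⊕ g*`,
with the degrees given explicitly. -/
def tpair (_A : NData K n g) (d₁ d₂ : ZMod 2) (u v : g × Module.Dual K g) : K :=
  u.2 v.1 + sgn K d₁ d₂ * v.2 u.1

/-- The coboundary of a `1`-cochain with values in the dual module (with the coadjoint
action), on homogeneous arguments with the indicated degrees. -/
def tdelta (θ : (Fin (n + 2) → g) → Module.Dual K g)
    (dx : Fin (n + 1) → ZMod 2) (dY : Fin (n + 2) → ZMod 2)
    (x : Fin (n + 1) → g) (Y : Fin (n + 2) → g) : Module.Dual K g :=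
  θ (Fin.snoc (fun k => A.α (x k)) (A.br Y))
    + A.coad (∑ k, dx k) (∑ k, dY k) (fun k => A.α (x k)) (θ Y)
    - ∑ i, sgn K (∑ k, dx k) (psum dY i) •
        θ (Function.update (fun k => A.α (Y k)) i (A.act x (Y i)))
    - ∑ i : Fin (n + 2), (sgn K (∑ k, dx k) (psum dY i) * (-1 : K) ^ (n + 1 - (i : ℕ))
          * sgn K ((∑ k, dx k) + dY i) (ssum dY i)) •
        A.coad ((∑ k, dY k) + dY i) ((∑ k, dx k) + dY i)
          (fun k => A.α (Y (i.succAbove k))) (θ (Fin.snoc x (Y i)))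

/-- `θ` is an even `1`-supercocycle with values in `g*`:
it is even, equivariant, super-skew-symmetric and `δθ = 0`. -/
def TZ1 (θ : (Fin (n + 2) → g) → Module.Dual K g) : Prop :=
  (∀ (d : Fin (n + 2) → ZMod 2) (p : Fin (n + 2) → g), A.Homog p d →
      θ p ∈ A.dualG (∑ i, d i)) ∧
  (∀ p : Fin (n + 2) → g, θ (fun i => A.α (p i)) = (θ p).comp A.α) ∧
  (∀ (d : Fin (n + 2) → ZMod 2) (p : Fin (n + 2) → g), A.Homog p d →
      ∀ i j : Fin (n + 2), (i : ℕ) + 1 = (j : ℕ) →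
        θ (p ∘ Equiv.swap i j) = -(sgn K (d i) (d j) • θ p)) ∧
  (∀ (dx : Fin (n + 1) → ZMod 2) (dY : Fin (n + 2) → ZMod 2)
      (x : Fin (n + 1) → g) (Y : Fin (n + 2) → g), A.Homog x dx → A.Homog Y dY →
        A.tdelta θ dx dY x Y = 0)

/-- The cyclicity condition `θ(x,y)(z) + (-1)^{|y||z|} θ(x,z)(y) = 0`. -/
def TCyclic (θ : (Fin (n + 2) → g) → Module.Dual K g) : Prop :=
  ∀ (dx : Fin (n + 1) → ZMod 2) (dy dz : ZMod 2) (x : Fin (n + 1) → g) (y z : g),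
    A.Homog x dx → y ∈ A.G dy → z ∈ A.G dz →
      θ (Fin.snoc x y) z + sgn K dy dz * θ (Fin.snoc x z) y = 0

/-- `I` is a Hom-ideal: stable under `α` and absorbing in the first slot. -/
def IsHomIdeal (I : Submodule K g) : Prop :=
  (∀ x ∈ I, A.α x ∈ I) ∧ ∀ p : Fin (n + 2) → g, p 0 ∈ I → A.br p ∈ I

/-- `I` is a graded subspace: it is spanned by its homogeneous elements. -/
def IsGradedSub (I : Submodule K g) : Prop :=
  I ≤ Submodule.span K ((I : Set g) ∩ ((A.G 0 : Set g) ∪ (A.G 1 : Set g)))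

/-- The orthogonal space of `S` with respect to a bilinear form `B`. -/
def perpB (_A : NData K n g) (B : g →ₗ[K] g →ₗ[K] K) (S : Submodule K g) : Submodule K g where
  carrier := {x | ∀ y ∈ S, B x y = 0}
  add_mem' := by
    intro a b ha hb y hy
    simp [ha y hy, hb y hy]
  zero_mem' := by intro y _; simp
  smul_mem' := by
    intro c x hx y hy
    simp [hx y hy]

/-- `B` is a metric on `A`: nondegenerate, supersymmetric, consistent, invariant, and
`α` is `B`-symmetric. -/
def IsMetric (B : g →ₗ[K] g →ₗ[K] K) : Prop :=
  (∀ x : g, (∀ y : g, B x y = 0) → x = 0) ∧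
  (∀ (dx dy : ZMod 2) (x y : g), x ∈ A.G dx → y ∈ A.G dy →
      B x y = sgn K dx dy * B y x) ∧
  (∀ (dx dy : ZMod 2) (x y : g), x ∈ A.G dx → y ∈ A.G dy → dx ≠ dy → B x y = 0) ∧
  (∀ (dx : Fin (n + 1) → ZMod 2) (dy : ZMod 2) (x : Fin (n + 1) → g) (y z : g),
      A.Homog x dx → y ∈ A.G dy →
        B (A.act x y) z = -(sgn K (∑ i, dx i) dy * B y (A.act x z))) ∧
  (∀ x y : g, B (A.α x) y = B (A.α y) x)

/-- `[S, g, …, g]` (ideal-type product, `S` in the first slot). -/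
def brFirst (S : Submodule K g) : Submodule K g :=
  Submodule.span K {y | ∃ p : Fin (n + 2) → g, p 0 ∈ S ∧ y = A.br p}

/-- `[g, …, g, S]` (`S` in the last slot). -/
def brLast (S : Submodule K g) : Submodule K g :=
  Submodule.span K {y | ∃ p : Fin (n + 2) → g, p (Fin.last (n + 1)) ∈ S ∧ y = A.br p}

/-- `[S, …, S]` (all slots in `S`). -/
def brAll (S : Submodule K g) : Submodule K g :=
  Submodule.span K {y | ∃ p : Fin (n + 2) → g, (∀ i, p i ∈ S) ∧ y = A.br p}

/-- The lower central series: `lcs 0 = g = g¹`, `lcs m = g^{m+1}`. -/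
def lcs (m : ℕ) : Submodule K g := Nat.rec ⊤ (fun _ ih => A.brFirst ih) m

/-- The derived series: `ds 0 = g = g^{(0)}`, `ds m = g^{(m)}`. -/
def ds (m : ℕ) : Submodule K g := Nat.rec ⊤ (fun _ ih => A.brAll ih) m

/-- `C(V) = {x | [x,g,…,g] ⊆ V}`. -/
def cv (S : Submodule K g) : Submodule K g where
  carrier := {x | ∀ p : Fin (n + 2) → g, A.br (Function.update p 0 x) ∈ S}
  add_mem' := by
    intro a b ha hb p
    rw [A.br.map_update_add]
    exact S.add_mem (ha p) (hb p)
  zero_mem' := by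
    intro p
    rw [A.br.map_update_zero]
    exact S.zero_mem
  smul_mem' := by
    intro c x hx p
    rw [A.br.map_update_smul]
    exact S.smul_mem c (hx p)

/-- The ascending series `C₀(g) = 0`, `C_{i+1}(g) = C(Cᵢ(g))`. -/
def cs (m : ℕ) : Submodule K g := Nat.rec ⊥ (fun _ ih => A.cv ih) m

/-- `g` is nilpotent of length exactly `k` (with the convention `g¹ = g = lcs 0`). -/
def NilpLength (k : ℕ) : Prop :=
  1 ≤ k ∧ A.lcs (k - 1) = ⊥ ∧ ∀ j, 1 ≤ j → j < k → A.lcs (j - 1) ≠ ⊥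

/-- `g` is solvable of length exactly `k`. -/
def SolvLength (k : ℕ) : Prop :=
  A.ds k = ⊥ ∧ ∀ j < k, A.ds j ≠ ⊥

/-- `[S, T*g, …, T*g]_θ`-type span for the `T*`-extension, `S` in the first slot,
over homogeneous annotated tuples. -/
def tbrFirst (θ : (Fin (n + 2) → g) → Module.Dual K g)
    (S : Submodule K (g × Module.Dual K g)) : Submodule K (g × Module.Dual K g) :=
  Submodule.span K {u | ∃ (d : Fin (n + 2) → ZMod 2) (p : Fin (n + 2) → g × Module.Dual K g),
    (∀ i, p i ∈ A.tG (d i)) ∧ p 0 ∈ S ∧ u = A.tbr θ d p}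

/-- All-slots bracket span for the `T*`-extension, over homogeneous annotated tuples. -/
def tbrAll (θ : (Fin (n + 2) → g) → Module.Dual K g)
    (S : Submodule K (g × Module.Dual K g)) : Submodule K (g × Module.Dual K g) :=
  Submodule.span K {u | ∃ (d : Fin (n + 2) → ZMod 2) (p : Fin (n + 2) → g × Module.Dual K g),
    (∀ i, p i ∈ A.tG (d i)) ∧ (∀ i, p i ∈ S) ∧ u = A.tbr θ d p}

/-- Lower central series of the `T*`-extension. -/
def tlcs (θ : (Fin (n + 2) → g) → Module.Dual K g) (m : ℕ) :
    Submodule K (g × Module.Dual K g) := Nat.rec ⊤ (fun _ ih => A.tbrFirst θ ih) m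

/-- Derived series of the `T*`-extension. -/
def tds (θ : (Fin (n + 2) → g) → Module.Dual K g) (m : ℕ) :
    Submodule K (g × Module.Dual K g) := Nat.rec ⊤ (fun _ ih => A.tbrAll θ ih) m

/-- Nilpotency length of the `T*`-extension. -/
def TNilpLength (θ : (Fin (n + 2) → g) → Module.Dual K g) (k : ℕ) : Prop :=
  1 ≤ k ∧ A.tlcs θ (k - 1) = ⊥ ∧ ∀ j, 1 ≤ j → j < k → A.tlcs θ (j - 1) ≠ ⊥

/-- Solvability length of the `T*`-extension. -/
def TSolvLength (θ : (Fin (n + 2) → g) → Module.Dual K g) (k : ℕ) : Prop :=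
  A.tds θ k = ⊥ ∧ ∀ j < k, A.tds θ j ≠ ⊥

end NData

/-! Applying the Hom-Filippov identity to the tuple `𝔶 ∧ z` gives
`α(𝔵)·(𝔶·z) = [𝔵,𝔶]_α·α(z) + (-1)^{|𝔵||𝔶|} α(𝔶)·(𝔵·z)`. The same identity with `𝔵` and `𝔶`
exchanged expresses `α(𝔶)·(𝔵·z)`; substituting it back, the terms `α(𝔵)·(𝔶·z)` cancel because
the sign squares to `1`, which leaves the claim for homogeneous `z`. Both sides are linear in `z`
and `g` is the sum of its homogeneous components. -/

theorem sgn_comm {K : Type u} [Field K] (a b : ZMod 2) : sgn K a b = sgn K b a := by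
  unfold sgn
  by_cases h : a = 1 ∧ b = 1 <;> simp [h, and_comm]

theorem sgn_mul_self {K : Type u} [Field K] (a b : ZMod 2) : sgn K a b * sgn K a b = 1 := by
  unfold sgn
  split_ifs <;> ring

theorem psum_snoc_castSucc {m : ℕ} (d : Fin m → ZMod 2) (a : ZMod 2) (j : Fin m) :
    psum (Fin.snoc d a) j.castSucc = psum d j := by
  simp [psum, Finset.sum_filter, Fin.sum_univ_castSucc, not_lt.2 (Fin.castSucc_lt_last j).le]

theorem psum_snoc_last {m : ℕ} (d : Fin m → ZMod 2) (a : ZMod 2) :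
    psum (Fin.snoc d a) (Fin.last m) = ∑ k, d k := by
  simp [psum, Finset.sum_filter, Fin.sum_univ_castSucc, Fin.castSucc_lt_last]

theorem LinearMap.ext_of_iSup_eq_top {R M N ι : Type*} [Semiring R] [AddCommMonoid M]
    [AddCommMonoid N] [Module R M] [Module R N] {p : ι → Submodule R M} (hp : iSup p = ⊤)
    {f f' : M →ₗ[R] N} (h : ∀ i, ∀ x ∈ p i, f x = f' x) : f = f' := by
  refine LinearMap.ext fun x => Submodule.iSup_induction p (motive := fun x => f x = f' x)
    (hp ▸ Submodule.mem_top) h (by simp only [map_zero]) ?_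
  intro a b ha hb
  rw [map_add, map_add, ha, hb]

namespace NData

variable {K : Type u} [Field K] {n : ℕ} {g : Type v} [AddCommGroup g] [Module K g]
  {A : NData K n g}

theorem Homog.snoc {m : ℕ} {x : Fin m → g} {d : Fin m → ZMod 2} (hx : A.Homog x d)
    {z : g} {a : ZMod 2} (hz : z ∈ A.G a) : A.Homog (Fin.snoc x z) (Fin.snoc d a) := by
  intro i
  induction i using Fin.lastCases with
  | last => simpa only [Fin.snoc_last] using hz
  | cast j => simpa only [Fin.snoc_castSucc] using hx j

variable (A) in
def wbrActLin (dx : ZMod 2) (dy : Fin (n + 1) → ZMod 2) (x y : Fin (n + 1) → g) :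
    g →ₗ[K] g :=
  ∑ i, sgn K dx (psum dy i) • A.adE (A.comp x y i)

theorem wbrActLin_apply (dx : ZMod 2) (dy : Fin (n + 1) → ZMod 2) (x y : Fin (n + 1) → g)
    (z : g) : A.wbrActLin dx dy x y z = A.wbrAct dx dy x y z := by
  simp [wbrActLin, wbrAct, adE, act]

variable {dx dy : Fin (n + 1) → ZMod 2} {x y : Fin (n + 1) → g} {dz : ZMod 2} {z : g}

/-- The Hom-Filippov identity for the tuple `𝔶 ∧ z`, with the summand in which `𝔵` acts on `z`
split off. -/
theorem HomFilippov.act_map_act (hF : A.HomFilippov) (hx : A.Homog x dx) (hy : A.Homog y dy)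
    (hz : z ∈ A.G dz) :
    A.act (fun k => A.α (x k)) (A.act y z)
      = A.wbrAct (∑ i, dx i) dy x y (A.α z)
        + sgn K (∑ i, dx i) (∑ i, dy i) • A.act (fun k => A.α (y k)) (A.act x z) := by
  have H := hF dx _ x _ hx (hy.snoc hz)
  have hα : (fun k => A.α ((Fin.snoc y z : Fin (n + 2) → g) k))
      = Fin.snoc (fun k => A.α (y k)) (A.α z) :=
    Fin.comp_snoc _ _ _
  rw [hα, Fin.sum_univ_castSucc] at H
  simp only [psum_snoc_castSucc, psum_snoc_last, Fin.snoc_castSucc, Fin.snoc_last,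
    ← Fin.snoc_update, Fin.update_snoc_last] at H
  exact H

theorem HomFilippov.wbrAct_map_of_mem (hF : A.HomFilippov) (hx : A.Homog x dx)
    (hy : A.Homog y dy) (hz : z ∈ A.G dz) :
    A.wbrAct (∑ i, dx i) dy x y (A.α z)
      = -(sgn K (∑ i, dx i) (∑ i, dy i) • A.wbrAct (∑ i, dy i) dx y x (A.α z)) := by
  have hxy := hF.act_map_act hx hy hz
  have hyx := hF.act_map_act hy hx hz
  rw [sgn_comm] at hyx
  have hss := sgn_mul_self (K := K) (∑ i, dx i) (∑ i, dy i)
  linear_combination (norm := module) -hxy - sgn K (∑ i, dx i) (∑ i, dy i) • hyx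
    - hss • A.act (fun k => A.α (x k)) (A.act y z)

end NData

/-- The induced action of `[·,·]_α` on `α(g)` is super-skew-symmetric:
`[𝔵,𝔶]_α · α(z) = -(-1)^{|𝔵||𝔶|} [𝔶,𝔵]_α · α(z)`. -/
theorem wbrAct_skew {K : Type u} [Field K] {n : ℕ} {g : Type v}
    [AddCommGroup g] [Module K g] (A : NData K n g) (hA : A.IsHomNambuLieSuper)
    (dx dy : Fin (n + 1) → ZMod 2) (x y : Fin (n + 1) → g)
    (hx : A.Homog x dx) (hy : A.Homog y dy) (z : g) :
    A.wbrAct (∑ i, dx i) dy x y (A.α z)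
      = -(sgn K (∑ i, dx i) (∑ i, dy i) • A.wbrAct (∑ i, dy i) dx y x (A.α z)) := by
  have hF : A.HomFilippov := hA.2.2.2.2
  have key : A.wbrActLin (∑ i, dx i) dy x y ∘ₗ A.α
      = -(sgn K (∑ i, dx i) (∑ i, dy i) • A.wbrActLin (∑ i, dy i) dx y x ∘ₗ A.α) :=
    LinearMap.ext_of_iSup_eq_top A.internal.submodule_iSup_eq_top fun _ w hw => by
      simpa only [LinearMap.comp_apply, LinearMap.neg_apply, LinearMap.smul_apply,
        NData.wbrActLin_apply] using hF.wbrAct_map_of_mem hx hy hw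
  simpa only [LinearMap.comp_apply, LinearMap.neg_apply, LinearMap.smul_apply,
    NData.wbrActLin_apply] using LinearMap.congr_fun key z
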